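/- Fix an integer s ≥ 0. Let (P_N)_{N≥1} be a moderate sequence of Laurent polynomials over ℂ (indexed by a single positive integer N), and suppose that for each N there is a Laurent polynomial Q_N over ℂ with P_N(A) = (A^{2N} − A^{−2N})^s · Q_N(A). Then there exist constants C', m' > 0 such that |Q_N(e^{iπ/2N})| ≤ C' N^{m'} for all N ≥ 1. (This is the paper's l'Hôpital argument: even though the normalizing factor (A^{2N} − A^{−2N})^s vanishes at A = e^{iπ/2N}, the normalized values still grow at most polynomially in N.) -/

import Mathlib

open LaurentPolynomial

/-- A sequence of Laurent polynomials over `ℂ`, indexed by a single positive integer, is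
*moderate* if there are constants `C, m > 0` such that for every `N` the absolute values
of the maximal degree, the minimal degree (i.e. of every exponent carrying a nonzero
coefficient) and of all coefficients are less than `C·N^m`. -/
def Moderate (P : ℕ+ → LaurentPolynomial ℂ) : Prop :=
  ∃ C m : ℝ, 0 < C ∧ 0 < m ∧ ∀ N : ℕ+,
    (∀ j : ℤ, (P N).coeff j ≠ 0 → |(j : ℝ)| < C * ((N : ℕ) : ℝ) ^ m) ∧
    (∀ j : ℤ, ‖(P N).coeff j‖ < C * ((N : ℕ) : ℝ) ^ m)

/-- Evaluation of a Laurent polynomial `∑_j a_j A^j` at a nonzero complex number. -/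
noncomputable def evalL (p : LaurentPolynomial ℂ) (z : ℂ) : ℂ :=
  ∑ j ∈ p.coeff.support, p.coeff j * z ^ j

/-!
If `P = (A^n - A^{-n}) R` with `n > 0`, the coefficients satisfy `p_k = r_{k-n} - r_{k+n}`,
and telescoping gives `r_k = ∑_{i ≥ 0} p_{k+n+2ni}` (a finite sum, as `R` has finite support).
Hence `R` is supported in any interval containing the support of `P`, and every coefficient of
`R` is bounded by the ℓ¹-norm of `P`, so that `‖R‖₁ ≤ (width of the interval) · ‖P‖₁`.
Dividing `s` times by `A^{2N} - A^{-2N}`, the ℓ¹-norm of `Q_N` is at most polynomial in `N`,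
and it bounds `|Q_N(z)|` at every point of the unit circle; the vanishing of the divisor at
`e^{iπ/2N}` plays no role.
-/

open Finset

section Telescope

variable {M : Type*} [AddCommGroup M] {f g : ℤ → M} {n : ℤ}

theorem eq_sum_add_of_eq_sub (h : ∀ k, g k = f (k - n) - f (k + n)) (k : ℤ) (t : ℕ) :
    f k = ∑ i ∈ range t, g (k + n + 2 * n * i) + f (k + 2 * n * t) := by
  induction t with
  | zero => simp
  | succ t ih =>
    have hstep := h (k + n + 2 * n * t)
    rw [show k + n + 2 * n * t - n = k + 2 * n * t by ring,
      show k + n + 2 * n * t + n = k + 2 * n * ↑(t + 1) by push_cast; ring] at hstep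
    rw [ih, sum_range_succ, hstep]
    abel

theorem exists_eq_sum_of_eq_sub (h : ∀ k, g k = f (k - n) - f (k + n)) (hn : 0 < n)
    (hf : BddAbove (Function.support f)) (k : ℤ) :
    ∃ t : ℕ, f k = ∑ i ∈ range t, g (k + n + 2 * n * i) := by
  obtain ⟨K, hK⟩ := hf
  refine ⟨(K + 1 - k).toNat, ?_⟩
  have hbeyond : f (k + 2 * n * (K + 1 - k).toNat) = 0 :=
    Function.notMem_support.1 fun hmem => by
      nlinarith [hK hmem, Int.self_le_toNat (K + 1 - k), Int.natCast_nonneg (K + 1 - k).toNat]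
  rw [eq_sum_add_of_eq_sub h k, hbeyond, add_zero]

theorem le_of_ne_zero_of_eq_sub (h : ∀ k, g k = f (k - n) - f (k + n)) (hn : 0 < n)
    (hf : BddAbove (Function.support f)) {b : ℤ} (hg : ∀ j, g j ≠ 0 → j ≤ b) {k : ℤ}
    (hk : f k ≠ 0) : k ≤ b := by
  obtain ⟨t, ht⟩ := exists_eq_sum_of_eq_sub h hn hf k
  obtain ⟨i, -, hi⟩ := exists_ne_zero_of_sum_ne_zero (ht ▸ hk)
  nlinarith [hg _ hi, (Nat.cast_nonneg i : (0 : ℤ) ≤ i)]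

theorem ge_of_ne_zero_of_eq_sub (h : ∀ k, g k = f (k - n) - f (k + n)) (hn : 0 < n)
    (hf : BddBelow (Function.support f)) {a : ℤ} (hg : ∀ j, g j ≠ 0 → a ≤ j) {k : ℤ}
    (hk : f k ≠ 0) : a ≤ k := by
  -- reflect `k ↦ -k` to reduce to the upper bound
  have h' : ∀ k, -g (-k) = f (-(k - n)) - f (-(k + n)) := fun k => by
    rw [h, neg_sub, show -k + n = -(k - n) by ring, show -k - n = -(k + n) by ring]
  have hf' : BddAbove (Function.support fun k => f (-k)) := by
    obtain ⟨K, hK⟩ := hf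
    exact ⟨-K, fun j hj => le_neg.2 (hK hj)⟩
  have := le_of_ne_zero_of_eq_sub h' hn hf' (b := -a)
    (fun j hj => le_neg.2 (hg _ (neg_ne_zero.1 hj))) (k := -k) (by rwa [neg_neg])
  omega

end Telescope

theorem norm_le_sum_norm_of_eq_sub {M : Type*} [NormedAddCommGroup M] {f g : ℤ → M} {n : ℤ}
    (h : ∀ k, g k = f (k - n) - f (k + n)) (hn : 0 < n)
    (hf : BddAbove (Function.support f)) {s : Finset ℤ} (hg : ∀ j, g j ≠ 0 → j ∈ s) (k : ℤ) :
    ‖f k‖ ≤ ∑ j ∈ s, ‖g j‖ := by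
  obtain ⟨t, ht⟩ := exists_eq_sum_of_eq_sub h hn hf k
  have hinj : Set.InjOn (fun i : ℕ => k + n + 2 * n * i) (range t) := fun a _ b _ hab => by
    simpa [hn.ne'] using hab
  calc ‖f k‖ ≤ ∑ i ∈ range t, ‖g (k + n + 2 * n * i)‖ := ht ▸ norm_sum_le _ _
    _ = ∑ j ∈ (range t).image (fun i : ℕ => k + n + 2 * n * i), ‖g j‖ :=
      (sum_image (f := fun j => ‖g j‖) hinj).symm
    _ ≤ ∑ j ∈ s, ‖g j‖ := by
      simpa only [← coe_nnnorm, ← NNReal.coe_sum, NNReal.coe_le_coe] using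
        sum_le_sum_of_ne_zero fun j _ hj => hg j (nnnorm_ne_zero_iff.1 hj)

namespace LaurentPolynomial

section Ring

variable {R : Type*} [Ring R]

theorem coeff_T_sub_T_mul (n : ℤ) (p : R[T;T⁻¹]) (k : ℤ) :
    ((T n - T (-n)) * p).coeff k = p.coeff (k - n) - p.coeff (k + n) := by
  rw [sub_mul, AddMonoidAlgebra.coeff_sub, Finsupp.sub_apply]
  simp only [T, AddMonoidAlgebra.coeff_single_mul_apply, one_mul, neg_neg]
  rw [neg_add_eq_sub, add_comm n]

theorem support_coeff_subset_of_T_sub_T_mul {n : ℤ} (hn : 0 < n) {p : R[T;T⁻¹]} {a b : ℤ}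
    (hP : ((T n - T (-n)) * p).coeff.support ⊆ Icc a b) : p.coeff.support ⊆ Icc a b := by
  have hrec := coeff_T_sub_T_mul n p
  have hP' (j) (hj : ((T n - T (-n)) * p).coeff j ≠ 0) : a ≤ j ∧ j ≤ b :=
    mem_Icc.1 (hP (Finsupp.mem_support_iff.2 hj))
  intro k hk
  rw [Finsupp.mem_support_iff] at hk
  exact mem_Icc.2 ⟨ge_of_ne_zero_of_eq_sub hrec hn p.coeff.hasFiniteSupport.bddBelow
      (fun j hj => (hP' j hj).1) hk,
    le_of_ne_zero_of_eq_sub hrec hn p.coeff.hasFiniteSupport.bddAbove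
      (fun j hj => (hP' j hj).2) hk⟩

end Ring

section NormedRing

variable {R : Type*} [NormedRing R]

def l1Norm (p : R[T;T⁻¹]) : ℝ := ∑ j ∈ p.coeff.support, ‖p.coeff j‖

theorem l1Norm_nonneg (p : R[T;T⁻¹]) : 0 ≤ l1Norm p := sum_nonneg fun _ _ => norm_nonneg _

theorem norm_coeff_le_l1Norm_T_sub_T_mul {n : ℤ} (hn : 0 < n) (p : R[T;T⁻¹]) (k : ℤ) :
    ‖p.coeff k‖ ≤ l1Norm ((T n - T (-n)) * p) :=
  norm_le_sum_norm_of_eq_sub (coeff_T_sub_T_mul n p) hn p.coeff.hasFiniteSupport.bddAbove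
    (fun _ hj => Finsupp.mem_support_iff.2 hj) k

theorem l1Norm_le_card_mul {p : R[T;T⁻¹]} {s : Finset ℤ} (hs : p.coeff.support ⊆ s) {M : ℝ}
    (hM : ∀ j, ‖p.coeff j‖ ≤ M) : l1Norm p ≤ #s * M := by
  have hM0 : 0 ≤ M := (norm_nonneg _).trans (hM 0)
  calc l1Norm p ≤ #p.coeff.support * M := by
        simpa only [l1Norm, nsmul_eq_mul] using sum_le_card_nsmul _ _ M fun j _ => hM j
    _ ≤ #s * M := by gcongr

theorem l1Norm_le_of_T_sub_T_pow_mul {n : ℤ} (hn : 0 < n) {a b : ℤ} (s : ℕ) {q : R[T;T⁻¹]}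
    (hP : ((T n - T (-n)) ^ s * q).coeff.support ⊆ Icc a b) :
    q.coeff.support ⊆ Icc a b ∧
      l1Norm q ≤ #(Icc a b) ^ s * l1Norm ((T n - T (-n)) ^ s * q) := by
  induction s generalizing q with
  | zero => simpa using hP
  | succ s ih =>
    rw [pow_succ, mul_assoc] at hP
    obtain ⟨hsupp, hl1⟩ := ih hP
    refine ⟨support_coeff_subset_of_T_sub_T_mul hn hsupp, ?_⟩
    calc l1Norm q ≤ #(Icc a b) * l1Norm ((T n - T (-n)) * q) :=
          l1Norm_le_card_mul (support_coeff_subset_of_T_sub_T_mul hn hsupp)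
            (norm_coeff_le_l1Norm_T_sub_T_mul hn q)
      _ ≤ #(Icc a b) *
            (#(Icc a b) ^ s * l1Norm ((T n - T (-n)) ^ s * ((T n - T (-n)) * q))) := by
          gcongr
      _ = #(Icc a b) ^ (s + 1) * l1Norm ((T n - T (-n)) ^ (s + 1) * q) := by
          rw [pow_succ (T n - T (-n) : R[T;T⁻¹]) s, mul_assoc ((T n - T (-n)) ^ s) _ q]
          ring

end NormedRing

theorem norm_evalL_le_l1Norm (p : ℂ[T;T⁻¹]) {z : ℂ} (hz : ‖z‖ = 1) :
    ‖evalL p z‖ ≤ l1Norm p := by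
  calc ‖evalL p z‖ ≤ ∑ j ∈ p.coeff.support, ‖p.coeff j * z ^ j‖ := norm_sum_le _ _
    _ = l1Norm p := by simp only [norm_mul, norm_zpow, hz, one_zpow, mul_one, l1Norm]

theorem norm_evalL_le_of_coeff_le {n : ℤ} (hn : 0 < n) {s : ℕ} {q : ℂ[T;T⁻¹]} {X : ℝ}
    (hX : 1 ≤ X) (hsupp : ∀ j : ℤ, ((T n - T (-n)) ^ s * q).coeff j ≠ 0 → |(j : ℝ)| ≤ X)
    (hcoeff : ∀ j, ‖((T n - T (-n)) ^ s * q).coeff j‖ ≤ X) {z : ℂ} (hz : ‖z‖ = 1) :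
    ‖evalL q z‖ ≤ (3 * X) ^ (s + 1) * X := by
  have hsub : ((T n - T (-n)) ^ s * q).coeff.support ⊆ Icc (-⌊X⌋) ⌊X⌋ := fun j hj => by
    have := abs_le.1 (hsupp j (Finsupp.mem_support_iff.1 hj))
    exact mem_Icc.2 ⟨neg_le.1 (Int.le_floor.2 (by push_cast; linarith)), Int.le_floor.2 this.2⟩
  have hcard : (#(Icc (-⌊X⌋) ⌊X⌋) : ℝ) ≤ 3 * X := by
    have hfloor : (0 : ℤ) ≤ ⌊X⌋ := Int.floor_nonneg.2 (by linarith)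
    rw [Int.card_Icc, ← Int.cast_natCast, Int.toNat_of_nonneg (by omega)]
    push_cast
    linarith [Int.floor_le X]
  calc ‖evalL q z‖ ≤ l1Norm q := norm_evalL_le_l1Norm q hz
    _ ≤ #(Icc (-⌊X⌋) ⌊X⌋) ^ s * l1Norm ((T n - T (-n)) ^ s * q) :=
        (l1Norm_le_of_T_sub_T_pow_mul hn s hsub).2
    _ ≤ (3 * X) ^ s * (3 * X * X) := by
        refine mul_le_mul (by gcongr) ?_ (l1Norm_nonneg _) (by positivity)
        exact (l1Norm_le_card_mul hsub hcoeff).trans (by gcongr)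
    _ = (3 * X) ^ (s + 1) * X := by ring

end LaurentPolynomial

/-- If `(P_N)` is a moderate sequence of Laurent polynomials and
`P_N = (A^{2N} - A^{-2N})^s · Q_N` for Laurent polynomials `Q_N`, then the values
`|Q_N(e^{iπ/2N})|` grow at most polynomially in `N`. -/
theorem moderate_quotient_polynomial_growth
    (s : ℕ) (P Q : ℕ+ → LaurentPolynomial ℂ) (hP : Moderate P)
    (hQ : ∀ N : ℕ+,
      P N = ((T (2 * ((N : ℕ) : ℤ)) : LaurentPolynomial ℂ) - T (-(2 * ((N : ℕ) : ℤ)))) ^ s * Q N) :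
    ∃ C' m' : ℝ, 0 < C' ∧ 0 < m' ∧ ∀ N : ℕ+,
      ‖evalL (Q N) (Complex.exp (Real.pi * Complex.I / (2 * ((N : ℕ) : ℂ))))‖ ≤
        C' * ((N : ℕ) : ℝ) ^ m' := by
  obtain ⟨C, m, hC, hm, hbound⟩ := hP
  refine ⟨3 ^ (s + 1) * max C 1 ^ (s + 2), m * (s + 2), by positivity, by positivity, fun N => ?_⟩
  have hN : (1 : ℝ) ≤ (N : ℕ) := Nat.one_le_cast.2 N.pos
  have hX : 1 ≤ max C 1 * ((N : ℕ) : ℝ) ^ m :=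
    one_le_mul_of_one_le_of_one_le (le_max_right _ _) (Real.one_le_rpow hN hm.le)
  have hCX : C * ((N : ℕ) : ℝ) ^ m ≤ max C 1 * ((N : ℕ) : ℝ) ^ m := by
    gcongr
    exact le_max_left _ _
  have hz : ‖Complex.exp (Real.pi * Complex.I / (2 * ((N : ℕ) : ℂ)))‖ = 1 := by
    simp [Complex.norm_exp, Complex.div_re]
  calc _ ≤ (3 * (max C 1 * ((N : ℕ) : ℝ) ^ m)) ^ (s + 1) * (max C 1 * ((N : ℕ) : ℝ) ^ m) :=
        norm_evalL_le_of_coeff_le (n := 2 * ((N : ℕ) : ℤ)) (by have := N.pos; omega) hX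
          (fun j hj => ((hbound N).1 j (by rwa [hQ N])).le.trans hCX)
          (fun j => by rw [← hQ N]; exact ((hbound N).2 j).le.trans hCX) hz
    _ = 3 ^ (s + 1) * max C 1 ^ (s + 2) * ((N : ℕ) : ℝ) ^ (m * (s + 2)) := by
        rw [Real.rpow_mul (by positivity),
          show ((s : ℝ) + 2) = ((s + 2 : ℕ) : ℝ) by push_cast; ring, Real.rpow_natCast]
        ring
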